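/- Let K_1,...,K_j be convex bodies in R^n such that K_k and K_l are contained in mutually orthogonal linear subspaces for all 1 ≤ k < l ≤ j. Then R(K_1 + ... + K_j)² = R(K_1)² + ... + R(K_j)², where R denotes the Euclidean circumradius. -/

import Mathlib

open Metric Finset

/-- The Euclidean circumradius of a set `K`: the smallest `ρ ≥ 0` such that `K` is
contained in some closed ball of radius `ρ`. -/
noncomputable def circR {n : ℕ} (K : Set (EuclideanSpace ℝ (Fin n))) : ℝ :=
  sInf {ρ : ℝ | 0 ≤ ρ ∧ ∃ x, K ⊆ Metric.closedBall x ρ}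

/-- The Minkowski sum of a finite family of subsets of `ℝⁿ`. -/
def msum {n j : ℕ} (K : Fin j → Set (EuclideanSpace ℝ (Fin n))) :
    Set (EuclideanSpace ℝ (Fin n)) :=
  {x | ∃ f : Fin j → EuclideanSpace ℝ (Fin n), (∀ i, f i ∈ K i) ∧ x = ∑ i, f i}

/-!
Let `P i` be the orthogonal projection onto `V i`. Projecting a circumcentre of `K i`
onto `V i` gives a circumcentre `c i ∈ V i`, and Pythagoras in the orthogonal family `V`
puts `K₁ + ⋯ + Kⱼ` inside the ball of radius `√(∑ R(K i)²)` about `∑ c i`. Conversely, if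
that sum lies in a ball `B(z, ρ)`, Bessel's inequality applied to `∑ x i - z` gives
`∑ ‖x i - P i z‖² ≤ ρ²` for all `x i ∈ K i`, and choosing each `x i ∈ K i` farthest from
`P i z` makes `‖x i - P i z‖ ≥ R(K i)`.
-/

section OrthogonalFamily

variable {E ι : Type*} [NormedAddCommGroup E] [InnerProductSpace ℝ E] [Fintype ι]
  {V : ι → Submodule ℝ E}

theorem OrthogonalFamily.norm_sum_sq_of_mem
    (hV : OrthogonalFamily ℝ (fun i => V i) fun i => (V i).subtypeₗᵢ)
    {x : ι → E} (hx : ∀ i, x i ∈ V i) :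
    ‖∑ i, x i‖ ^ 2 = ∑ i, ‖x i‖ ^ 2 :=
  hV.norm_sum (fun i => ⟨x i, hx i⟩) univ

variable [∀ i, (V i).HasOrthogonalProjection]

theorem OrthogonalFamily.sum_norm_starProjection_sq_le
    (hV : OrthogonalFamily ℝ (fun i => V i) fun i => (V i).subtypeₗᵢ) (y : E) :
    ∑ i, ‖(V i).starProjection y‖ ^ 2 ≤ ‖y‖ ^ 2 := by
  set s := ∑ i, (V i).starProjection y
  have hs : ‖s‖ ^ 2 = ∑ i, ‖(V i).starProjection y‖ ^ 2 :=
    hV.norm_sum_sq_of_mem fun i => (V i).starProjection_apply_mem y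
  have hys : inner ℝ y s = ‖s‖ ^ 2 := by
    rw [hs, _root_.inner_sum]
    refine sum_congr rfl fun i _ => ?_
    have h := (V i).starProjection_inner_eq_zero y _ ((V i).starProjection_apply_mem y)
    rw [inner_sub_left, real_inner_self_eq_norm_sq] at h
    linarith
  nlinarith [norm_sub_sq_real y s, sq_nonneg ‖y - s‖]

theorem OrthogonalFamily.starProjection_sum_of_mem
    (hV : OrthogonalFamily ℝ (fun i => V i) fun i => (V i).subtypeₗᵢ)
    {x : ι → E} (hx : ∀ i, x i ∈ V i) (i : ι) :
    (V i).starProjection (∑ j, x j) = x i := by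
  rw [map_sum, sum_eq_single i (fun j _ hji => (V i).starProjection_apply_eq_zero_iff.mpr
    ((hV.isOrtho hji).le (hx j))) (fun h => (h (mem_univ i)).elim)]
  exact Submodule.starProjection_eq_self_iff.mpr (hx i)

theorem OrthogonalFamily.sum_norm_sub_starProjection_sq_le
    (hV : OrthogonalFamily ℝ (fun i => V i) fun i => (V i).subtypeₗᵢ)
    {x : ι → E} (hx : ∀ i, x i ∈ V i) (z : E) :
    ∑ i, ‖x i - (V i).starProjection z‖ ^ 2 ≤ ‖∑ i, x i - z‖ ^ 2 := by
  simpa only [map_sub, hV.starProjection_sum_of_mem hx] using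
    hV.sum_norm_starProjection_sq_le (∑ i, x i - z)

end OrthogonalFamily

theorem subset_closedBall_starProjection {E : Type*} [NormedAddCommGroup E]
    [InnerProductSpace ℝ E] {V : Submodule ℝ E} [V.HasOrthogonalProjection] {K : Set E}
    (hKV : K ⊆ V) {c : E} {r : ℝ} (h : K ⊆ closedBall c r) :
    K ⊆ closedBall (V.starProjection c) r := fun k hk =>
  calc dist k (V.starProjection c) = dist (V.starProjection k) (V.starProjection c) := by
        rw [Submodule.starProjection_eq_self_iff.mpr (hKV hk)]
    _ ≤ dist k c := by simpa using V.lipschitzWith_starProjection.dist_le_mul k c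
    _ ≤ r := h hk

section circR

variable {n : ℕ} {K : Set (EuclideanSpace ℝ (Fin n))}

theorem circR_nonneg (K : Set (EuclideanSpace ℝ (Fin n))) : 0 ≤ circR K :=
  Real.sInf_nonneg fun _ hρ => hρ.1

theorem circR_le_of_subset_closedBall {x : EuclideanSpace ℝ (Fin n)} {ρ : ℝ} (hρ : 0 ≤ ρ)
    (h : K ⊆ closedBall x ρ) : circR K ≤ ρ :=
  csInf_le ⟨0, fun _ hρ => hρ.1⟩ ⟨hρ, x, h⟩

theorem Bornology.IsBounded.exists_subset_closedBall_of_circR_lt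
    (hK : Bornology.IsBounded K) {r : ℝ} (h : circR K < r) : ∃ x, K ⊆ closedBall x r := by
  obtain ⟨ρ, hρ, hKρ⟩ := hK.subset_closedBall_lt 0 0
  have hne : {ρ : ℝ | 0 ≤ ρ ∧ ∃ x, K ⊆ closedBall x ρ}.Nonempty :=
    ⟨ρ, hρ.le, 0, hKρ⟩
  obtain ⟨ρ', ⟨-, x, hx⟩, hρ'r⟩ := exists_lt_of_csInf_lt hne h
  exact ⟨x, hx.trans (closedBall_subset_closedBall hρ'r.le)⟩

theorem le_circR (hK : Bornology.IsBounded K) {r : ℝ}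
    (h : ∀ x ρ, 0 ≤ ρ → K ⊆ closedBall x ρ → r ≤ ρ) : r ≤ circR K := by
  by_contra! hlt
  obtain ⟨ρ, hKρ, hρr⟩ := exists_between hlt
  obtain ⟨x, hx⟩ := hK.exists_subset_closedBall_of_circR_lt hKρ
  exact (h x ρ ((circR_nonneg K).trans hKρ.le) hx).not_gt hρr

theorem IsCompact.exists_subset_closedBall_circR (hK : IsCompact K) :
    ∃ c, K ⊆ closedBall c (circR K) := by
  rcases K.eq_empty_or_nonempty with rfl | ⟨k₀, hk₀⟩
  · exact ⟨0, Set.empty_subset _⟩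
  set C : ℕ → Set (EuclideanSpace ℝ (Fin n)) :=
    fun m => {c | K ⊆ closedBall c (circR K + 1 / (m + 1))}
  have hC_closed (m : ℕ) : IsClosed (C m) := by
    simp only [C, Set.subset_def, mem_closedBall, Set.ofPred_forall]
    exact isClosed_biInter fun k _ => isClosed_le (by fun_prop) continuous_const
  have hC_anti (m : ℕ) : C (m + 1) ⊆ C m := fun c hc =>
    hc.trans (closedBall_subset_closedBall (by gcongr; linarith))
  have hC_ne (m : ℕ) : (C m).Nonempty :=
    hK.isBounded.exists_subset_closedBall_of_circR_lt (lt_add_of_pos_right _ (by positivity))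
  have hC_cpt : IsCompact (C 0) :=
    isCompact_of_isClosed_isBounded (hC_closed 0) <| isBounded_closedBall.subset
      fun c hc => mem_closedBall_comm.mp (hc hk₀)
  obtain ⟨c, hc⟩ := IsCompact.nonempty_iInter_of_sequence_nonempty_isCompact_isClosed
    C hC_anti hC_ne hC_cpt hC_closed
  refine ⟨c, fun k hk => ?_⟩
  simpa using ge_of_tendsto' (tendsto_one_div_add_atTop_nhds_zero_nat.const_add (circR K))
    fun m => Set.mem_iInter.mp hc m hk

theorem IsCompact.exists_mem_circR_le_dist (hK : IsCompact K) (hne : K.Nonempty)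
    (p : EuclideanSpace ℝ (Fin n)) : ∃ x ∈ K, circR K ≤ dist x p := by
  obtain ⟨x, hx, hmax⟩ :=
    hK.exists_isMaxOn hne (continuous_id.dist continuous_const).continuousOn
  exact ⟨x, hx, circR_le_of_subset_closedBall dist_nonneg fun k hk => hmax hk⟩

theorem IsCompact.exists_mem_subset_closedBall_circR (hK : IsCompact K)
    {V : Submodule ℝ (EuclideanSpace ℝ (Fin n))} (hKV : K ⊆ V) :
    ∃ c ∈ V, K ⊆ closedBall c (circR K) :=
  let ⟨c, hc⟩ := hK.exists_subset_closedBall_circR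
  ⟨V.starProjection c, V.starProjection_apply_mem c, subset_closedBall_starProjection hKV hc⟩

end circR

section msum

variable {n j : ℕ} {K : Fin j → Set (EuclideanSpace ℝ (Fin n))}
  {V : Fin j → Submodule ℝ (EuclideanSpace ℝ (Fin n))}

theorem msum_subset_closedBall_of_orthogonalFamily
    (hV : OrthogonalFamily ℝ (fun i => V i) fun i => (V i).subtypeₗᵢ)
    (hKV : ∀ i, K i ⊆ V i) {c : Fin j → EuclideanSpace ℝ (Fin n)} (hcV : ∀ i, c i ∈ V i)
    {r : Fin j → ℝ} (hc : ∀ i, K i ⊆ closedBall (c i) (r i)) :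
    msum K ⊆ closedBall (∑ i, c i) √(∑ i, r i ^ 2) := by
  rintro _ ⟨x, hx, rfl⟩
  rw [mem_closedBall_iff_norm, ← sum_sub_distrib]
  refine Real.le_sqrt_of_sq_le ?_
  rw [hV.norm_sum_sq_of_mem fun i => (V i).sub_mem (hKV i (hx i)) (hcV i)]
  exact sum_le_sum fun i _ =>
    pow_le_pow_left₀ (norm_nonneg _) (mem_closedBall_iff_norm.mp (hc i (hx i))) 2

theorem sum_circR_sq_le_of_msum_subset_closedBall
    (hV : OrthogonalFamily ℝ (fun i => V i) fun i => (V i).subtypeₗᵢ)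
    (hKV : ∀ i, K i ⊆ V i) (hcpt : ∀ i, IsCompact (K i)) (hne : ∀ i, (K i).Nonempty)
    {z : EuclideanSpace ℝ (Fin n)} {ρ : ℝ} (hz : msum K ⊆ closedBall z ρ) :
    ∑ i, circR (K i) ^ 2 ≤ ρ ^ 2 := by
  choose x hx hfar using fun i =>
    (hcpt i).exists_mem_circR_le_dist (hne i) ((V i).starProjection z)
  calc ∑ i, circR (K i) ^ 2 ≤ ∑ i, ‖x i - (V i).starProjection z‖ ^ 2 :=
        sum_le_sum fun i _ =>
          pow_le_pow_left₀ (circR_nonneg _) ((hfar i).trans_eq (dist_eq_norm _ _)) 2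
    _ ≤ ‖∑ i, x i - z‖ ^ 2 := hV.sum_norm_sub_starProjection_sq_le (fun i => hKV i (hx i)) z
    _ ≤ ρ ^ 2 :=
        pow_le_pow_left₀ (norm_nonneg _) (mem_closedBall_iff_norm.mp (hz ⟨x, hx, rfl⟩)) 2

end msum

theorem sq_circumradius_additive_of_orthogonal_general {n j : ℕ}
    (K : Fin j → Set (EuclideanSpace ℝ (Fin n)))
    (hcpt : ∀ i, IsCompact (K i))
    (hne : ∀ i, (K i).Nonempty)
    (horth : ∃ V : Fin j → Submodule ℝ (EuclideanSpace ℝ (Fin n)),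
      (∀ i, K i ⊆ (V i : Set (EuclideanSpace ℝ (Fin n)))) ∧
        ∀ k l, k ≠ l → ∀ x ∈ V k, ∀ y ∈ V l, (inner ℝ x y : ℝ) = 0) :
    circR (msum K) ^ 2 = ∑ i, circR (K i) ^ 2 := by
  obtain ⟨V, hKV, hVorth⟩ := horth
  have hV : OrthogonalFamily ℝ (fun i => V i) fun i => (V i).subtypeₗᵢ :=
    orthogonalFamily_iff_pairwise.mpr fun k l hkl =>
      Submodule.isOrtho_iff_inner_eq.mpr (hVorth k l hkl)
  choose c hcV hc using fun i => (hcpt i).exists_mem_subset_closedBall_circR (hKV i)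
  have hupper := msum_subset_closedBall_of_orthogonalFamily hV hKV hcV hc
  suffices circR (msum K) = √(∑ i, circR (K i) ^ 2) by
    rw [this, Real.sq_sqrt (by positivity)]
  refine le_antisymm (circR_le_of_subset_closedBall (Real.sqrt_nonneg _) hupper) ?_
  refine le_circR (isBounded_closedBall.subset hupper) fun z ρ hρ hz => ?_
  exact (Real.sqrt_le_left hρ).mpr
    (sum_circR_sq_le_of_msum_subset_closedBall hV hKV hcpt hne hz)

theorem sq_circumradius_additive_of_orthogonal {n j : ℕ}
    (K : Fin j → Set (EuclideanSpace ℝ (Fin n)))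
    (hconv : ∀ i, Convex ℝ (K i)) (hcpt : ∀ i, IsCompact (K i))
    (hne : ∀ i, (K i).Nonempty)
    (horth : ∃ V : Fin j → Submodule ℝ (EuclideanSpace ℝ (Fin n)),
      (∀ i, K i ⊆ (V i : Set (EuclideanSpace ℝ (Fin n)))) ∧
        ∀ k l, k ≠ l → ∀ x ∈ V k, ∀ y ∈ V l, (inner ℝ x y : ℝ) = 0) :
    circR (msum K) ^ 2 = ∑ i, circR (K i) ^ 2 :=
  sq_circumradius_additive_of_orthogonal_general K hcpt hne horth
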